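/- arXiv:2602.02209 — 2 statements merged into one kernel-verified Lean document; each statement's English description precedes it below -/
import Mathlib

section
/- Let n ≥ 1, ρ = (n−1, n−2, …, 1, 0) ∈ ℤ^n, and let L = ℤ[x₁^{±1},…,x_n^{±1}, q^{±1}] be the Laurent polynomial ring (the group algebra of ℤ^n × ℤ with basis the monomials x^ν q^i). Define the bullet action of S_n on L ℤ-linearly by w • (x^ν q^i) = x^{w·ν} q^{i + (w·ν − ν)·ρ}, where (w·ν)_j = ν_{w⁻¹(j)}. Then: (a) each w• is a ring automorphism of L and this defines a group action of S_n; (b) for λ ∈ ℤ^n non-increasing (dominant), set sym_λ(q) = Σ_{μ ∈ S_n·λ} q^{(μ − λ₋)·ρ} x^μ, where λ₋ is the non-decreasing rearrangement of λ; the invariant ring L^{S_n•} is the free ℤ[q^{±1}]-module with basis {sym_λ(q) : λ non-increasing}; (c) moreover L^{S_n•} ∩ ℤ[x₁^{±1},…,x_n^{±1}][q] = ⊕_λ ℤ[q]·sym_λ(q). -/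
/-- The Laurent polynomial ring `L = ℤ[x₁^{±1},…,x_n^{±1}, q^{±1}]`, realized as the group
algebra of `ℤ^n × ℤ`: the monomial `x^ν q^i` is `Finsupp.single (ν, i) 1`. -/
abbrev Lring (n : ℕ) := AddMonoidAlgebra ℤ ((Fin n → ℤ) × ℤ)

/-- `ρ = (n-1, n-2, ..., 1, 0) ∈ ℤ^n`. -/
def rhoVec (n : ℕ) : Fin n → ℤ := fun i => (n : ℤ) - 1 - (i : ℕ)

/-- The dot product `μ · ρ`. -/
def dotRho {n : ℕ} (μ : Fin n → ℤ) : ℤ := ∑ i, μ i * rhoVec n i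

/-- The map on monomial exponents underlying the bullet action:
`(ν, i) ↦ (w·ν, i + (w·ν - ν)·ρ)` where `(w·ν)_j = ν_{w⁻¹(j)}`. -/
def bulletDom {n : ℕ} (w : Equiv.Perm (Fin n)) (p : (Fin n → ℤ) × ℤ) : (Fin n → ℤ) × ℤ :=
  ((fun j => p.1 (w⁻¹ j)), p.2 + dotRho ((fun j => p.1 (w⁻¹ j)) - p.1))

/-- The bullet action of `w ∈ S_n` on `L`, defined ℤ-linearly by
`w • (x^ν q^i) = x^{w·ν} q^{i + (w·ν - ν)·ρ}`. -/
noncomputable def bulletAct {n : ℕ} (w : Equiv.Perm (Fin n)) : Lring n →ₗ[ℤ] Lring n :=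
  AddMonoidAlgebra.mapDomainLinearMap ℤ ℤ (bulletDom w)

/-- The invariant ring `L^{S_n•}`, as a ℤ-submodule of `L`. -/
noncomputable def bulletInv (n : ℕ) : Submodule ℤ (Lring n) where
  carrier := {f | ∀ w : Equiv.Perm (Fin n), bulletAct w f = f}
  add_mem' := fun ha hb w => by rw [map_add, ha w, hb w]
  zero_mem' := fun w => map_zero _
  smul_mem' := fun c f hf w => by rw [map_smul, hf w]

/-- The unique non-decreasing rearrangement `λ₋` of `λ`. -/
def antidom {n : ℕ} (l : Fin n → ℤ) : Fin n → ℤ := l ∘ (Tuple.sort l)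

/-- `sym_λ(q) = Σ_{μ ∈ S_n·λ} q^{(μ - λ₋)·ρ} x^μ`. -/
noncomputable def symq {n : ℕ} (l : Fin n → ℤ) : Lring n :=
  ∑ μ ∈ Finset.image (fun σ : Equiv.Perm (Fin n) => (fun j => l (σ j))) Finset.univ,
    AddMonoidAlgebra.single (μ, dotRho (μ - antidom l)) 1

/-- The polynomial part `ℤ[x₁^{±1},…,x_n^{±1}][q] ⊆ L`: the span of the monomials `x^ν q^i`
with `i ≥ 0`. -/
noncomputable def polyPart (n : ℕ) : Submodule ℤ (Lring n) :=
  Submodule.span ℤ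
    {m : Lring n | ∃ (ν : Fin n → ℤ) (i : ℕ), m = AddMonoidAlgebra.single (ν, (i : ℤ)) 1}

/-!
The bullet action is induced by the additive automorphisms `(ν, i) ↦ (w·ν, i + (w·ν − ν)·ρ)`
of the exponent lattice `ℤ^n × ℤ`, so it acts by ring automorphisms. Since `ν₋` is constant on
`S_n`-orbits, an orbit of exponents is determined by the dominant rearrangement `λ` of `ν`
together with `i − (ν − ν₋)·ρ`, and it contains `(λ₋, i)`. The coefficient function of
`q^i · sym_λ(q)` is exactly the indicator of the orbit with invariant `(λ, i)`; hence these
elements are linearly independent, and an invariant element, whose coefficients are constant on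
orbits, is the combination of them with coefficients read off at the points `(λ₋, i)`.
By the rearrangement inequality `ν₋·ρ ≤ ν·ρ`, every other point of that orbit has larger
`q`-degree than `(λ₋, i)`, which gives (c).
-/

open AddMonoidAlgebra

section FibreIndicator

variable {ι X R : Type*} [Semiring R]

theorem linearIndependent_of_coeff_eq_ite [DecidableEq ι] (e : ι → AddMonoidAlgebra R X)
    (κ : X → ι) (r : ι → X) (hκr : ∀ i, κ (r i) = i)
    (he : ∀ i x, (e i).coeff x = if κ x = i then 1 else 0) :
    LinearIndependent R e := by
  let F : AddMonoidAlgebra R X →ₗ[R] ι → R :=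
    LinearMap.pi fun j => Finsupp.lapply (r j) ∘ₗ (coeffLinearEquiv R).toLinearMap
  refine LinearIndependent.of_comp F ?_
  convert Pi.linearIndependent_single_one ι R with i
  ext j
  simp [F, he, hκr, Pi.single_apply, eq_comm]

theorem mem_span_image_of_coeff_eq_ite [DecidableEq ι] (e : ι → AddMonoidAlgebra R X)
    (κ : X → ι) (r : ι → X)
    (he : ∀ i x, (e i).coeff x = if κ x = i then 1 else 0) {s : Set ι} {f : AddMonoidAlgebra R X}
    (hf : ∀ x, f.coeff x = f.coeff (r (κ x))) (hs : ∀ x ∈ f.coeff.support, κ x ∈ s) :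
    f ∈ Submodule.span R (e '' s) := by
  have hrepr : f = ∑ i ∈ f.coeff.support.image κ, f.coeff (r i) • e i := by
    ext x
    simp only [coeff_sum, Finsupp.finsetSum_apply, coeff_smul_apply, he, smul_eq_mul, mul_ite,
      mul_one, mul_zero, Finset.sum_ite_eq]
    split_ifs with hx
    · exact hf x
    · exact Finsupp.notMem_support_iff.mp fun hsupp => hx (Finset.mem_image_of_mem κ hsupp)
  rw [hrepr]
  refine Submodule.sum_mem _ fun i hi => Submodule.smul_mem _ _ (Submodule.subset_span ⟨i, ?_, rfl⟩)
  obtain ⟨x, hx, rfl⟩ := Finset.mem_image.mp hi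
  exact hs x hx

end FibreIndicator

section Bullet

variable {n : ℕ}

lemma dotRho_sub (a b : Fin n → ℤ) : dotRho (a - b) = dotRho a - dotRho b := by
  simp [dotRho, sub_mul, Finset.sum_sub_distrib]

lemma bulletDom_add (w : Equiv.Perm (Fin n)) (p p' : (Fin n → ℤ) × ℤ) :
    bulletDom w (p + p') = bulletDom w p + bulletDom w p' := by
  refine Prod.ext rfl ?_
  simp only [bulletDom, dotRho, Prod.snd_add, Prod.fst_add, Pi.add_apply, Pi.sub_apply, add_mul,
    sub_mul, Finset.sum_add_distrib, Finset.sum_sub_distrib]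
  ring

lemma bulletDom_one (p : (Fin n → ℤ) × ℤ) : bulletDom 1 p = p := by
  simp [bulletDom, dotRho]

lemma bulletDom_mul (w w' : Equiv.Perm (Fin n)) (p : (Fin n → ℤ) × ℤ) :
    bulletDom (w * w') p = bulletDom w (bulletDom w' p) := by
  refine Prod.ext rfl ?_
  simp only [bulletDom, mul_inv_rev, Equiv.Perm.mul_apply, dotRho_sub]
  ring

def bulletAddEquiv (w : Equiv.Perm (Fin n)) : ((Fin n → ℤ) × ℤ) ≃+ ((Fin n → ℤ) × ℤ) where
  toFun := bulletDom w
  invFun := bulletDom w⁻¹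
  left_inv p := by rw [← bulletDom_mul, inv_mul_cancel, bulletDom_one]
  right_inv p := by rw [← bulletDom_mul, mul_inv_cancel, bulletDom_one]
  map_add' := bulletDom_add w

lemma bulletAct_eq_mapDomainRingEquiv (w : Equiv.Perm (Fin n)) :
    ⇑(bulletAct w) = mapDomainRingEquiv ℤ (bulletAddEquiv w) :=
  rfl

lemma coeff_bulletAct (w : Equiv.Perm (Fin n)) (f : Lring n) (p : (Fin n → ℤ) × ℤ) :
    (bulletAct w f).coeff p = f.coeff (bulletDom w⁻¹ p) := by
  rw [bulletAct_eq_mapDomainRingEquiv, coeff_mapDomainRingEquiv, Finsupp.equivMapDomain_apply]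
  rfl

lemma bulletAct_map_mul (w : Equiv.Perm (Fin n)) (f g : Lring n) :
    bulletAct w (f * g) = bulletAct w f * bulletAct w g := by
  simp only [bulletAct_eq_mapDomainRingEquiv, map_mul]

lemma bulletAct_map_one (w : Equiv.Perm (Fin n)) : bulletAct w (1 : Lring n) = 1 := by
  simp only [bulletAct_eq_mapDomainRingEquiv, map_one]

lemma bulletAct_bijective (w : Equiv.Perm (Fin n)) : Function.Bijective (bulletAct (n := n) w) := by
  rw [bulletAct_eq_mapDomainRingEquiv]
  exact RingEquiv.bijective _

lemma bulletAct_one_apply (f : Lring n) : bulletAct 1 f = f := by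
  ext p
  rw [coeff_bulletAct, inv_one, bulletDom_one]

lemma bulletAct_mul_apply (w w' : Equiv.Perm (Fin n)) (f : Lring n) :
    bulletAct (w * w') f = bulletAct w (bulletAct w' f) := by
  ext p
  rw [coeff_bulletAct, coeff_bulletAct, coeff_bulletAct, mul_inv_rev, bulletDom_mul]

lemma antidom_comp_perm (l : Fin n → ℤ) (σ : Equiv.Perm (Fin n)) :
    antidom (l ∘ σ) = antidom l :=
  Tuple.comp_perm_comp_sort_eq_comp_sort

lemma antidom_antidom (l : Fin n → ℤ) : antidom (antidom l) = antidom l :=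
  antidom_comp_perm l _

lemma antidom_comp_sort_inv (l : Fin n → ℤ) : antidom l ∘ ⇑(Tuple.sort l)⁻¹ = l := by
  ext j
  simp [antidom, Equiv.Perm.inv_def]

def dominant (l : Fin n → ℤ) : Fin n → ℤ := antidom l ∘ Fin.rev

lemma dominant_eq_comp_perm (l : Fin n → ℤ) :
    dominant l = l ∘ ⇑(Tuple.sort l * Fin.revPerm : Equiv.Perm (Fin n)) :=
  rfl

lemma antitone_dominant (l : Fin n → ℤ) : Antitone (dominant l) :=
  fun _ _ hij => Tuple.monotone_sort l (Fin.rev_le_rev.mpr hij)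

lemma dominant_comp_perm (l : Fin n → ℤ) (σ : Equiv.Perm (Fin n)) :
    dominant (l ∘ σ) = dominant l := by
  rw [dominant, antidom_comp_perm, dominant]

lemma antidom_dominant (l : Fin n → ℤ) : antidom (dominant l) = antidom l := by
  rw [dominant_eq_comp_perm, antidom_comp_perm]

lemma dominant_eq_self {l : Fin n → ℤ} (hl : Antitone l) : dominant l = l := by
  have hsort : antidom l = l ∘ Fin.revPerm :=
    (Tuple.comp_sort_eq_comp_iff_monotone.mpr fun i j hij => hl (Fin.rev_le_rev.mpr hij)).symm
  ext i
  simp [dominant, hsort]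

lemma dominant_antidom {l : Fin n → ℤ} (hl : Antitone l) : dominant (antidom l) = l := by
  rw [antidom, dominant_comp_perm, dominant_eq_self hl]

def permOrbit (l : Fin n → ℤ) : Finset (Fin n → ℤ) :=
  Finset.image (fun σ : Equiv.Perm (Fin n) => (fun j => l (σ j))) Finset.univ

lemma mem_permOrbit_iff {l : Fin n → ℤ} (hl : Antitone l) (μ : Fin n → ℤ) :
    μ ∈ permOrbit l ↔ dominant μ = l := by
  simp only [permOrbit, Finset.mem_image, Finset.mem_univ, true_and]
  constructor
  · rintro ⟨σ, rfl⟩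
    exact (dominant_comp_perm l σ).trans (dominant_eq_self hl)
  · rintro rfl
    refine ⟨(Tuple.sort μ * Fin.revPerm)⁻¹, ?_⟩
    ext j
    simp [dominant_eq_comp_perm]

lemma antidom_of_mem_permOrbit {l μ : Fin n → ℤ} (h : μ ∈ permOrbit l) : antidom μ = antidom l := by
  obtain ⟨σ, -, rfl⟩ := Finset.mem_image.mp h
  exact antidom_comp_perm l σ

lemma dotRho_antidom_le (l : Fin n → ℤ) : dotRho (antidom l) ≤ dotRho l := by
  have hanti : Antivary (antidom l) (rhoVec n) := fun i j hij =>
    Tuple.monotone_sort l (Fin.le_def.mpr (by simp only [rhoVec] at hij; omega))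
  calc dotRho (antidom l) ≤ ∑ i, antidom l ((Tuple.sort l)⁻¹ i) * rhoVec n i :=
        hanti.sum_smul_le_sum_comp_perm_smul
    _ = dotRho l := by
        conv_rhs => rw [← antidom_comp_sort_inv l]
        rfl

/-- Complete invariant of a bullet orbit of exponents `(ν, i)`. -/
def orbitKey (p : (Fin n → ℤ) × ℤ) : {l : Fin n → ℤ // Antitone l} × ℤ :=
  (⟨dominant p.1, antitone_dominant p.1⟩, p.2 - dotRho (p.1 - antidom p.1))

def orbitRep (k : {l : Fin n → ℤ // Antitone l} × ℤ) : (Fin n → ℤ) × ℤ :=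
  (antidom k.1.1, k.2)

lemma orbitKey_orbitRep (k : {l : Fin n → ℤ // Antitone l} × ℤ) : orbitKey (orbitRep k) = k := by
  simp [orbitKey, orbitRep, dominant_antidom k.1.2, antidom_antidom, dotRho]

lemma orbitKey_bulletDom (w : Equiv.Perm (Fin n)) (p : (Fin n → ℤ) × ℤ) :
    orbitKey (bulletDom w p) = orbitKey p := by
  have hw : (fun j => p.1 (w⁻¹ j)) = p.1 ∘ ⇑w⁻¹ := rfl
  simp only [orbitKey, bulletDom, hw, dominant_comp_perm, antidom_comp_perm, dotRho_sub]
  congr 1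
  ring

lemma bulletDom_sort_orbitRep (p : (Fin n → ℤ) × ℤ) :
    bulletDom (Tuple.sort p.1) (orbitRep (orbitKey p)) = p := by
  have hfst : (fun j => antidom p.1 ((Tuple.sort p.1)⁻¹ j)) = p.1 := antidom_comp_sort_inv p.1
  refine Prod.ext ?_ ?_
  · simpa [bulletDom, orbitRep, orbitKey, antidom_dominant] using hfst
  · simp only [bulletDom, orbitRep, orbitKey, antidom_dominant, hfst, dotRho_sub]
    ring

lemma coeff_eq_coeff_orbitRep {f : Lring n} (hf : f ∈ bulletInv n) (p : (Fin n → ℤ) × ℤ) :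
    f.coeff p = f.coeff (orbitRep (orbitKey p)) := by
  conv_rhs => rw [← hf (Tuple.sort p.1)⁻¹, coeff_bulletAct, inv_inv, bulletDom_sort_orbitRep]

noncomputable def symFamily (k : {l : Fin n → ℤ // Antitone l} × ℤ) : Lring n :=
  single ((0 : Fin n → ℤ), k.2) 1 * symq k.1.1

lemma symFamily_eq_sum (k : {l : Fin n → ℤ // Antitone l} × ℤ) :
    symFamily k = ∑ μ ∈ permOrbit k.1.1, single (μ, k.2 + dotRho (μ - antidom k.1.1)) 1 := by
  simp [symFamily, symq, permOrbit, Finset.mul_sum, single_mul_single]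

lemma mk_eq_iff_orbitKey_eq {k : {l : Fin n → ℤ // Antitone l} × ℤ} {μ : Fin n → ℤ}
    (hμ : μ ∈ permOrbit k.1.1) (p : (Fin n → ℤ) × ℤ) :
    (μ, k.2 + dotRho (μ - antidom k.1.1)) = p ↔ μ = p.1 ∧ orbitKey p = k := by
  constructor
  · rintro rfl
    refine ⟨rfl, Prod.ext (Subtype.ext ((mem_permOrbit_iff k.1.2 μ).1 hμ)) ?_⟩
    simp [orbitKey, antidom_of_mem_permOrbit hμ]
  · rintro ⟨rfl, rfl⟩
    refine Prod.ext rfl ?_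
    simp [orbitKey, antidom_dominant]

lemma coeff_symFamily (k : {l : Fin n → ℤ // Antitone l} × ℤ) (p : (Fin n → ℤ) × ℤ) :
    (symFamily k).coeff p = if orbitKey p = k then 1 else 0 := by
  rw [symFamily_eq_sum, coeff_sum, Finsupp.finsetSum_apply]
  simp only [coeff_single, Finsupp.single_apply]
  rw [Finset.sum_congr rfl fun μ hμ => if_congr (mk_eq_iff_orbitKey_eq hμ p) rfl rfl]
  simp only [ite_and, Finset.sum_ite_eq']
  by_cases hk : orbitKey p = k
  · have hp : p.1 ∈ permOrbit k.1.1 := (mem_permOrbit_iff k.1.2 p.1).2 (by rw [← hk]; rfl)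
    simp [hp, hk]
  · simp [hk]

lemma symFamily_mem_bulletInv (k : {l : Fin n → ℤ // Antitone l} × ℤ) :
    symFamily k ∈ bulletInv n := by
  intro w
  ext p
  rw [coeff_bulletAct, coeff_symFamily, coeff_symFamily, orbitKey_bulletDom]

lemma polyPart_eq_supported : polyPart n = supported ℤ ℤ {p | 0 ≤ p.2} := by
  rw [supported_eq_span_single, polyPart]
  congr 1
  ext m
  constructor
  · rintro ⟨ν, i, rfl⟩
    exact ⟨(ν, i), Int.natCast_nonneg i, rfl⟩
  · rintro ⟨p, hp, rfl⟩
    exact ⟨p.1, p.2.toNat, by rw [Int.toNat_of_nonneg hp]⟩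

lemma symFamily_mem_polyPart {k : {l : Fin n → ℤ // Antitone l} × ℤ} (hk : 0 ≤ k.2) :
    symFamily k ∈ polyPart n := by
  rw [polyPart_eq_supported, mem_supported']
  intro p hp
  rw [coeff_symFamily, if_neg]
  rintro rfl
  have hle := dotRho_antidom_le p.1
  simp only [orbitKey, dotRho_sub] at hk
  exact hp (show 0 ≤ p.2 by omega)

theorem linearIndependent_symFamily : LinearIndependent ℤ (symFamily (n := n)) :=
  linearIndependent_of_coeff_eq_ite _ orbitKey orbitRep orbitKey_orbitRep coeff_symFamily

theorem span_symFamily : Submodule.span ℤ (Set.range (symFamily (n := n))) = bulletInv n := by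
  refine le_antisymm (Submodule.span_le.mpr (Set.range_subset_iff.mpr symFamily_mem_bulletInv))
    fun f hf => ?_
  rw [← Set.image_univ]
  exact mem_span_image_of_coeff_eq_ite _ orbitKey orbitRep coeff_symFamily
    (coeff_eq_coeff_orbitRep hf) fun _ _ => trivial

lemma range_symFamily_natCast :
    Set.range (fun p : {l : Fin n → ℤ // Antitone l} × ℕ => symFamily (p.1, (p.2 : ℤ))) =
      symFamily '' {k | 0 ≤ k.2} := by
  ext f
  constructor
  · rintro ⟨⟨l, i⟩, rfl⟩
    exact ⟨(l, i), Int.natCast_nonneg i, rfl⟩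
  · rintro ⟨⟨l, i⟩, hi, rfl⟩
    exact ⟨(l, i.toNat), by simp [Int.toNat_of_nonneg hi]⟩

theorem span_symFamily_nonneg :
    Submodule.span ℤ (symFamily '' {k | 0 ≤ k.2}) = bulletInv n ⊓ polyPart n := by
  refine le_antisymm (Submodule.span_le.mpr ?_) fun f hf => ?_
  · rintro _ ⟨k, hk, rfl⟩
    exact ⟨symFamily_mem_bulletInv k, symFamily_mem_polyPart hk⟩
  · obtain ⟨hinv, hpoly⟩ := Submodule.mem_inf.mp hf
    refine mem_span_image_of_coeff_eq_ite _ orbitKey orbitRep coeff_symFamily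
      (coeff_eq_coeff_orbitRep hinv) fun p hp => ?_
    rw [polyPart_eq_supported, mem_supported'] at hpoly
    by_contra hneg
    exact Finsupp.mem_support_iff.mp hp
      ((coeff_eq_coeff_orbitRep hinv p).trans (hpoly _ hneg))

end Bullet

theorem stmt9_general (n : ℕ) :
    -- (a) each `w•` is a ring automorphism, and this is a group action of `S_n`
    ((∀ w : Equiv.Perm (Fin n), ∀ f g : Lring n,
        bulletAct w (f * g) = bulletAct w f * bulletAct w g) ∧
      (∀ w : Equiv.Perm (Fin n), bulletAct w (1 : Lring n) = 1) ∧
      (∀ w : Equiv.Perm (Fin n), Function.Bijective (bulletAct (n := n) w)) ∧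
      (∀ f : Lring n, bulletAct (1 : Equiv.Perm (Fin n)) f = f) ∧
      (∀ w w' : Equiv.Perm (Fin n), ∀ f : Lring n,
        bulletAct (w * w') f = bulletAct w (bulletAct w' f))) ∧
    -- (b) `L^{S_n•}` is the free `ℤ[q^{±1}]`-module with basis the `sym_λ(q)`, `λ` dominant:
    -- the monomial multiples `q^i · sym_λ(q)` form a ℤ-basis of the invariants
    (LinearIndependent ℤ (fun p : {l : Fin n → ℤ // Antitone l} × ℤ =>
        (AddMonoidAlgebra.single ((0 : Fin n → ℤ), p.2) (1 : ℤ)) * symq p.1.1) ∧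
      Submodule.span ℤ (Set.range fun p : {l : Fin n → ℤ // Antitone l} × ℤ =>
        (AddMonoidAlgebra.single ((0 : Fin n → ℤ), p.2) (1 : ℤ)) * symq p.1.1) = bulletInv n) ∧
    -- (c) `L^{S_n•} ∩ ℤ[x^{±1}][q] = ⊕_λ ℤ[q]·sym_λ(q)`
    Submodule.span ℤ (Set.range fun p : {l : Fin n → ℤ // Antitone l} × ℕ =>
        (AddMonoidAlgebra.single ((0 : Fin n → ℤ), (p.2 : ℤ)) (1 : ℤ)) * symq p.1.1) =
      bulletInv n ⊓ polyPart n :=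
  ⟨⟨bulletAct_map_mul, bulletAct_map_one, bulletAct_bijective, bulletAct_one_apply,
    bulletAct_mul_apply⟩, ⟨linearIndependent_symFamily, span_symFamily⟩,
    range_symFamily_natCast ▸ span_symFamily_nonneg⟩

theorem stmt9 (n : ℕ) (hn : 1 ≤ n) :
    -- (a) each `w•` is a ring automorphism, and this is a group action of `S_n`
    ((∀ w : Equiv.Perm (Fin n), ∀ f g : Lring n,
        bulletAct w (f * g) = bulletAct w f * bulletAct w g) ∧
      (∀ w : Equiv.Perm (Fin n), bulletAct w (1 : Lring n) = 1) ∧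
      (∀ w : Equiv.Perm (Fin n), Function.Bijective (bulletAct (n := n) w)) ∧
      (∀ f : Lring n, bulletAct (1 : Equiv.Perm (Fin n)) f = f) ∧
      (∀ w w' : Equiv.Perm (Fin n), ∀ f : Lring n,
        bulletAct (w * w') f = bulletAct w (bulletAct w' f))) ∧
    -- (b) `L^{S_n•}` is the free `ℤ[q^{±1}]`-module with basis the `sym_λ(q)`, `λ` dominant:
    -- the monomial multiples `q^i · sym_λ(q)` form a ℤ-basis of the invariants
    (LinearIndependent ℤ (fun p : {l : Fin n → ℤ // Antitone l} × ℤ =>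
        (AddMonoidAlgebra.single ((0 : Fin n → ℤ), p.2) (1 : ℤ)) * symq p.1.1) ∧
      Submodule.span ℤ (Set.range fun p : {l : Fin n → ℤ // Antitone l} × ℤ =>
        (AddMonoidAlgebra.single ((0 : Fin n → ℤ), p.2) (1 : ℤ)) * symq p.1.1) = bulletInv n) ∧
    -- (c) `L^{S_n•} ∩ ℤ[x^{±1}][q] = ⊕_λ ℤ[q]·sym_λ(q)`
    Submodule.span ℤ (Set.range fun p : {l : Fin n → ℤ // Antitone l} × ℕ =>
        (AddMonoidAlgebra.single ((0 : Fin n → ℤ), (p.2 : ℤ)) (1 : ℤ)) * symq p.1.1) =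
      bulletInv n ⊓ polyPart n :=
  stmt9_general n
end

section
/- Fix a composition n = n₁ + … + n_r with consecutive blocks B₁,…,B_r, let W(L) be the group of rigid block permutations preserving block sizes, ρ = (n−1,…,1,0), and dot action ν•μ = ν·(μ+ρ) − ρ on ℤ^n. Let cox_L ∈ S_n be the permutation acting on each block B_i as the full cycle sending the j-th element of B_i to the (j+1)-st cyclically. Let k be a field, q > 1 an integer, t ≥ 1 a common multiple of n₁,…,n_r (so cox_L^t = 1), and ζ ∈ k^× of order q^t − 1. With φ(x)_j = (x_{cox_L(j)})^q and λ(ζ) = (ζ^{λ₁},…,ζ^{λ_n}), define s(λ) = ∏_{i=0}^{t−1} φ^i(λ(ζ)) ∈ (k^×)^n. Then the map μ ↦ s(μ+ρ) intertwines the dot action of W(L) on ℤ^n with the natural permutation action of W(L) on (k^×)^n: for all ν ∈ W(L) and μ ∈ ℤ^n, s((ν•μ)+ρ) = ν·s(μ+ρ). -/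
/-! A composition `n = n₁ + … + n_r` with consecutive blocks `B₁,…,B_r` is encoded by a
monotone surjective map `b : Fin n → Fin r`: the block `B_i` is the fiber `b⁻¹(i)`. -/

/-- The size `n_i` of the block `B_i`. -/
def blockSize {n r : ℕ} (b : Fin n → Fin r) (i : Fin r) : ℕ :=
  (Finset.univ.filter fun x => b x = i).card

/-- The start of the block `B_i`. -/
def blockStart {n r : ℕ} (b : Fin n → Fin r) (i : Fin r) : ℕ :=
  (Finset.univ.filter fun x => b x < i).card

/-- The position of `x` inside its block. -/
def blockPos {n r : ℕ} (b : Fin n → Fin r) (x : Fin n) : ℕ := (x : ℕ) - blockStart b (b x)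

/-- `w ∈ W(L)`: `w` is a rigid block permutation preserving block sizes. -/
def IsRigidBlockPerm {n r : ℕ} (b : Fin n → Fin r) (w : Equiv.Perm (Fin n)) : Prop :=
  ∃ τ : Equiv.Perm (Fin r), (∀ i, blockSize b (τ i) = blockSize b i) ∧
    ∀ x, b (w x) = τ (b x) ∧ blockPos b (w x) = blockPos b x

/-- The natural permutation action of `S_n` on `ℤ^n`: `(w·μ)_j = μ_{w⁻¹(j)}`. -/
def permAct {n : ℕ} (w : Equiv.Perm (Fin n)) (μ : Fin n → ℤ) : Fin n → ℤ :=
  fun j => μ (w⁻¹ j)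

/-- The dot action `w • μ = w·(μ + ρ) - ρ`. -/
def dotAct {n : ℕ} (w : Equiv.Perm (Fin n)) (μ : Fin n → ℤ) : Fin n → ℤ :=
  permAct w (μ + rhoVec n) - rhoVec n

/-- Jantzen's element `s(λ) = ∏_{i=0}^{t-1} φ^i(λ(ζ)) ∈ (k^×)^n`, where
`φ(x)_j = (x_{c(j)})^q` and `λ(ζ) = (ζ^{λ₁},…,ζ^{λ_n})`. -/
def jS {n : ℕ} {k : Type*} [Field k] (q t : ℕ) (c : Equiv.Perm (Fin n)) (ζ : kˣ)
    (l : Fin n → ℤ) : Fin n → kˣ :=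
  ∏ i ∈ Finset.range t,
    (fun x : Fin n → kˣ => fun j => (x (c j)) ^ q)^[i] (fun j => ζ ^ (l j))

/-! The dot action shifted by `ρ` is the permutation action, so the claim says that `s` is
`W(L)`-equivariant for the permutation action. Since `s(λ)_j = ∏_{i<t} ζ^{q^i λ_{cox_L^i(j)}}`,
this holds for every permutation commuting with `cox_L`, and a rigid block permutation does:
both `w (cox_L x)` and `cox_L (w x)` lie in block `τ(b x)` at position `blockPos x + 1`
modulo the common block size, and an element is determined by its block and its position. -/

section Blocks

variable {n r : ℕ} {b : Fin n → Fin r}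

lemma blockStart_le (hb : Monotone b) (x : Fin n) : blockStart b (b x) ≤ x := by
  calc blockStart b (b x) ≤ (Finset.Iio x).card :=
        Finset.card_le_card fun y hy => by
          simp only [Finset.mem_filter, Finset.mem_univ, true_and] at hy
          exact Finset.mem_Iio.mpr (hb.reflect_lt hy)
    _ = x := Fin.card_Iio x

lemma eq_of_block_eq_of_blockPos_eq (hb : Monotone b) {x y : Fin n}
    (hxy : b x = b y) (hpos : blockPos b x = blockPos b y) : x = y := by
  have hx := blockStart_le hb x
  have hy := blockStart_le hb y
  unfold blockPos at hpos
  rw [hxy] at hpos hx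
  exact Fin.ext (by omega)

lemma IsRigidBlockPerm.commute {c w : Equiv.Perm (Fin n)} (hb : Monotone b)
    (hc : ∀ x, b (c x) = b x ∧ blockPos b (c x) = (blockPos b x + 1) % blockSize b (b x))
    (hw : IsRigidBlockPerm b w) : Commute c w := by
  obtain ⟨τ, hsize, hτ⟩ := hw
  refine Equiv.ext fun x => eq_of_block_eq_of_blockPos_eq hb ?_ ?_
  · simp only [Equiv.Perm.mul_apply, (hc _).1, (hτ _).1]
  · simp only [Equiv.Perm.mul_apply, (hc _).2, (hτ _).2, (hτ _).1, hsize]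

end Blocks

lemma iterate_twistedPow_apply {n : ℕ} {M : Type*} [Monoid M] (q : ℕ)
    (c : Equiv.Perm (Fin n)) (g : Fin n → M) (i : ℕ) :
    (fun x : Fin n → M => fun j => (x (c j)) ^ q)^[i] g = fun j => g ((c ^ i) j) ^ q ^ i := by
  induction i with
  | zero => simp
  | succ i ih =>
    rw [Function.iterate_succ_apply', ih]
    funext j
    simp only [pow_succ, Equiv.Perm.mul_apply, ← pow_mul]

lemma jS_apply {n : ℕ} {k : Type*} [Field k] (q t : ℕ) (c : Equiv.Perm (Fin n)) (ζ : kˣ)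
    (l : Fin n → ℤ) (j : Fin n) :
    jS q t c ζ l j = ∏ i ∈ Finset.range t, (ζ ^ l ((c ^ i) j)) ^ q ^ i := by
  simp only [jS, Finset.prod_apply, iterate_twistedPow_apply]

lemma jS_permAct {n : ℕ} {k : Type*} [Field k] (q t : ℕ) {c w : Equiv.Perm (Fin n)}
    (hcw : Commute c w) (ζ : kˣ) (l : Fin n → ℤ) :
    jS q t c ζ (permAct w l) = fun j => jS q t c ζ l (w⁻¹ j) := by
  funext j
  simp only [jS_apply, permAct, ← Equiv.Perm.mul_apply, ((hcw.pow_left _).inv_right).eq]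

lemma dotAct_add_rhoVec {n : ℕ} (w : Equiv.Perm (Fin n)) (μ : Fin n → ℤ) :
    dotAct w μ + rhoVec n = permAct w (μ + rhoVec n) :=
  sub_add_cancel _ _

theorem stmt17_general {k : Type*} [Field k] (n r q t : ℕ)
    (b : Fin n → Fin r) (hb : Monotone b)
    (c : Equiv.Perm (Fin n))
    (hc : ∀ x, b (c x) = b x ∧ blockPos b (c x) = (blockPos b x + 1) % blockSize b (b x))
    (ζ : kˣ)
    (w : Equiv.Perm (Fin n)) (hw : IsRigidBlockPerm b w) (μ : Fin n → ℤ) :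
    jS q t c ζ (dotAct w μ + rhoVec n) = fun j => jS q t c ζ (μ + rhoVec n) (w⁻¹ j) := by
  rw [dotAct_add_rhoVec]
  exact jS_permAct q t (hw.commute hb hc) ζ _

/-- The map `μ ↦ s(μ+ρ)` intertwines the dot action of `W(L)` on `ℤ^n` with the natural
permutation action of `W(L)` on `(k^×)^n`. -/
theorem stmt17 {k : Type*} [Field k] (n r q t : ℕ) (hq : 1 < q) (ht : 1 ≤ t)
    (b : Fin n → Fin r) (hb : Monotone b) (hbs : Function.Surjective b)
    (hdvd : ∀ i : Fin r, blockSize b i ∣ t)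
    (c : Equiv.Perm (Fin n))
    (hc : ∀ x, b (c x) = b x ∧ blockPos b (c x) = (blockPos b x + 1) % blockSize b (b x))
    (ζ : kˣ) (hζ : orderOf ζ = q ^ t - 1)
    (w : Equiv.Perm (Fin n)) (hw : IsRigidBlockPerm b w) (μ : Fin n → ℤ) :
    jS q t c ζ (dotAct w μ + rhoVec n) = fun j => jS q t c ζ (μ + rhoVec n) (w⁻¹ j) :=
  stmt17_general n r q t b hb c hc ζ w hw μ
end
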